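/- Let 𝒳, 𝒴, 𝒵 be finite types, d ≥ 1, P a probability mass function on 𝒳×𝒴×𝒵, and (ρ^{x,y,z}) a family of d×d density matrices. Then the trace distance between the two Markov states equals a purely classical statistical distance: δ(ρ_{X↔Y↔(ZE)}, ρ_{X↔(Y,Z)↔E}) = (1/2)·Σ_{x,y,z} | P_{XY}(x,y)·P_{YZ}(y,z)/P_Y(y) − P(x,y,z) |, where terms with P_Y(y) = 0 are read as |0 − P(x,y,z)| = 0. -/

import Mathlib

open Matrix Kronecker
open scoped ComplexOrder

/-- Trace distance of two (Hermitian) matrices: half the sum of the absolute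
values of the eigenvalues of their difference. -/
noncomputable def traceDist {n : Type*} [Fintype n] [DecidableEq n]
    (A B : Matrix n n ℂ) : ℝ :=
  if h : (A - B).IsHermitian then (1 / 2) * ∑ i, |h.eigenvalues i| else 0

/-- A probability mass function on a finite type. -/
def IsPMF {𝒯 : Type*} [Fintype 𝒯] (P : 𝒯 → ℝ) : Prop :=
  (∀ t, 0 ≤ P t) ∧ ∑ t, P t = 1

/-- A density matrix: positive semidefinite (hence Hermitian) with trace 1. -/
def IsDensity {d : ℕ} (ρ : Matrix (Fin d) (Fin d) ℂ) : Prop :=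
  ρ.PosSemidef ∧ ρ.trace = 1

/-- The block-diagonal density matrix of a cq-state:  ρ = Σ_t P(t)·(E_{t,t} ⊗ ρ^t). -/
noncomputable def cqState {𝒯 : Type*} [Fintype 𝒯] [DecidableEq 𝒯] {d : ℕ}
    (P : 𝒯 → ℝ) (ρ : 𝒯 → Matrix (Fin d) (Fin d) ℂ) :
    Matrix (𝒯 × Fin d) (𝒯 × Fin d) ℂ :=
  ∑ t, (P t : ℂ) • (single t t 1 ⊗ₖ ρ t)

/-! Both Markov states are cq-states over `𝒳 × 𝒴 × 𝒵` with the same quantum parts `ρ_E^{y,z}`,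
so their difference is block diagonal with blocks `(Q t - P t) • ρ_E^{y,z}`, where
`Q = P_{XY} P_{YZ} / P_Y`. Comparing
characteristic polynomials, the eigenvalues of a block-diagonal Hermitian matrix are those of its
blocks, and a block `c • σ` with `σ ≥ 0` of trace one contributes `|c|` to the sum of absolute
eigenvalues. The only blocks with `ρ_E^{y,z}` not a density matrix are those with
`P_{YZ}(y, z) = 0`, where both weights vanish. -/

namespace Matrix

open Polynomial

variable {n : Type*} [Fintype n] [DecidableEq n]

theorem charpoly_blockDiagonal {R o : Type*} [CommRing R] [Fintype o] [DecidableEq o]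
    (M : o → Matrix n n R) : (blockDiagonal M).charpoly = ∏ k, (M k).charpoly := by
  have : charmatrix (blockDiagonal M) = blockDiagonal fun k => charmatrix (M k) := by
    ext ⟨i, k⟩ ⟨j, k'⟩
    by_cases hk : k = k' <;> by_cases hij : i = j <;>
      simp [blockDiagonal_apply, hk, hij]
  rw [charpoly, this, det_blockDiagonal]
  rfl

variable {𝕜 : Type*} [RCLike 𝕜] {A : Matrix n n 𝕜}

theorem IsHermitian.charpoly_ofReal_smul (hA : A.IsHermitian) (c : ℝ) :
    ((c : 𝕜) • A).charpoly = ∏ i, (X - C ((c * hA.eigenvalues i : ℝ) : 𝕜)) := by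
  conv_lhs => rw [hA.spectral_theorem, Unitary.conjStarAlgAut_apply, ← smul_mul_assoc,
    ← mul_smul_comm, charpoly_mul_comm, ← mul_assoc]
  simp [← diagonal_smul, charpoly_diagonal]

theorem IsHermitian.sum_comp_eigenvalues_eq_of_charpoly_eq {m β : Type*} [Fintype m]
    [AddCommMonoid β] (hA : A.IsHermitian) {f : m → ℝ}
    (h : A.charpoly = ∏ i, (X - C (f i : 𝕜))) (g : ℝ → β) :
    ∑ i, g (hA.eigenvalues i) = ∑ i, g (f i) := by
  have hmap : Finset.univ.val.map hA.eigenvalues = Finset.univ.val.map f := by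
    apply Multiset.map_injective (RCLike.ofReal_injective (K := 𝕜))
    rw [Multiset.map_map, ← hA.roots_charpoly_eq_eigenvalues, h,
      roots_prod _ _ (by simp [Finset.prod_ne_zero_iff, X_sub_C_ne_zero])]
    simp [Multiset.map_map]
  calc ∑ i, g (hA.eigenvalues i) = ((Finset.univ.val.map hA.eigenvalues).map g).sum := by
        rw [Multiset.map_map]; rfl
    _ = ∑ i, g (f i) := by rw [hmap, Multiset.map_map]; rfl

end Matrix

section CqState

open Polynomial

variable {𝒯 : Type*} [Fintype 𝒯] [DecidableEq 𝒯] {d : ℕ}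

theorem cqState_sub (Q P : 𝒯 → ℝ) (σ : 𝒯 → Matrix (Fin d) (Fin d) ℂ) :
    cqState Q σ - cqState P σ = cqState (Q - P) σ := by
  simp [cqState, sub_smul, Finset.sum_sub_distrib]

theorem cqState_eq_reindex_blockDiagonal (c : 𝒯 → ℝ) (σ : 𝒯 → Matrix (Fin d) (Fin d) ℂ) :
    cqState c σ = reindex (.prodComm _ _) (.prodComm _ _)
      (blockDiagonal fun t => (c t : ℂ) • σ t) := by
  ext ⟨t, i⟩ ⟨s, j⟩
  by_cases h : t = s <;>
    simp [cqState, Matrix.sum_apply, single_apply, blockDiagonal_apply, ite_and, h]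

theorem isHermitian_cqState (c : 𝒯 → ℝ) {σ : 𝒯 → Matrix (Fin d) (Fin d) ℂ}
    (hσ : ∀ t, (σ t).IsHermitian) : (cqState c σ).IsHermitian := by
  rw [cqState_eq_reindex_blockDiagonal]
  exact (isHermitian_blockDiagonal_iff.2 fun t =>
    (hσ t).smul (Complex.conj_ofReal (c t))).reindex _

theorem charpoly_cqState (c : 𝒯 → ℝ) {σ : 𝒯 → Matrix (Fin d) (Fin d) ℂ}
    (hσ : ∀ t, (σ t).IsHermitian) :
    (cqState c σ).charpoly =
      ∏ p : 𝒯 × Fin d, (X - C ((c p.1 * (hσ p.1).eigenvalues p.2 : ℝ) : ℂ)) := by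
  rw [cqState_eq_reindex_blockDiagonal, charpoly_reindex, charpoly_blockDiagonal,
    Fintype.prod_prod_type]
  exact Finset.prod_congr rfl fun t _ => (hσ t).charpoly_ofReal_smul (c t)

theorem traceDist_cqState (Q P : 𝒯 → ℝ) {σ : 𝒯 → Matrix (Fin d) (Fin d) ℂ}
    (hσ : ∀ t, (σ t).PosSemidef) (htr : ∀ t, Q t ≠ P t → (σ t).trace = 1) :
    traceDist (cqState Q σ) (cqState P σ) = 1 / 2 * ∑ t, |Q t - P t| := by
  have hherm := isHermitian_cqState (Q - P) fun t => (hσ t).1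
  rw [traceDist, cqState_sub, dif_pos hherm, hherm.sum_comp_eigenvalues_eq_of_charpoly_eq
    (charpoly_cqState _ fun t => (hσ t).1), Fintype.sum_prod_type]
  refine congrArg _ (Finset.sum_congr rfl fun t _ => ?_)
  change ∑ i, |(Q t - P t) * (hσ t).1.eigenvalues i| = |Q t - P t|
  simp_rw [abs_mul, abs_of_nonneg ((hσ t).eigenvalues_nonneg _), ← Finset.mul_sum]
  rcases eq_or_ne (Q t) (P t) with h | h
  · simp [h]
  · have hsum : ∑ i, (hσ t).1.eigenvalues i = 1 := by
      have := (hσ t).1.trace_eq_sum_eigenvalues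
      rw [htr t h] at this
      exact RCLike.ofReal_injective (K := ℂ) (by simpa using this.symm)
    rw [hsum, mul_one]

end CqState

theorem isDensity_inv_sum_smul_sum_smul {ι : Type*} [Fintype ι] {d : ℕ} {w : ι → ℝ}
    (hw : ∀ i, 0 ≤ w i) (hw₀ : ∑ i, w i ≠ 0) {ρ : ι → Matrix (Fin d) (Fin d) ℂ}
    (hρ : ∀ i, IsDensity (ρ i)) :
    IsDensity (((∑ i, w i : ℝ) : ℂ)⁻¹ • ∑ i, (w i : ℂ) • ρ i) := by
  refine ⟨(posSemidef_sum _ fun i _ => (hρ i).1.smul (Complex.zero_le_real.2 (hw i))).smul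
    (inv_nonneg.2 (Complex.zero_le_real.2 (Finset.sum_nonneg fun i _ => hw i))), ?_⟩
  simp only [trace_smul, trace_sum, (hρ _).2, smul_eq_mul, mul_one]
  rw [← Complex.ofReal_sum]
  exact inv_mul_cancel₀ (Complex.ofReal_ne_zero.2 hw₀)

theorem stmt6_general {𝒳 𝒴 𝒵 : Type*} [Fintype 𝒳] [DecidableEq 𝒳]
    [Fintype 𝒴] [DecidableEq 𝒴] [Fintype 𝒵] [DecidableEq 𝒵] {d : ℕ}
    (P : 𝒳 × 𝒴 × 𝒵 → ℝ) (hP : IsPMF P)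
    (ρ : 𝒳 × 𝒴 × 𝒵 → Matrix (Fin d) (Fin d) ℂ) (hρ : ∀ t, IsDensity (ρ t))
    -- marginals
    (PY : 𝒴 → ℝ)
    (PXY : 𝒳 × 𝒴 → ℝ)
    (PYZ : 𝒴 × 𝒵 → ℝ) (hPYZ : ∀ y z, PYZ (y, z) = ∑ x, P (x, y, z))
    -- conditional states ρ_E^{y,z}
    (ρE : 𝒴 × 𝒵 → Matrix (Fin d) (Fin d) ℂ)
    (hρE : ∀ y z, ρE (y, z) =
      if 0 < PYZ (y, z)
      then ((PYZ (y, z) : ℂ))⁻¹ • ∑ x, (P (x, y, z) : ℂ) • ρ (x, y, z)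
      else 0) :
    traceDist
        (cqState
          (fun t => if PY t.2.1 = 0 then 0 else PXY (t.1, t.2.1) * PYZ t.2 / PY t.2.1)
          (fun t => ρE t.2))
        (cqState P (fun t => ρE t.2))
      = (1 / 2) * ∑ t : 𝒳 × 𝒴 × 𝒵,
          |(if PY t.2.1 = 0 then 0 else PXY (t.1, t.2.1) * PYZ t.2 / PY t.2.1) - P t| := by
  have hPYZ_nonneg : ∀ y z, 0 ≤ PYZ (y, z) := fun y z => by
    rw [hPYZ]; exact Finset.sum_nonneg fun x _ => hP.1 _
  have hρE_density : ∀ y z, 0 < PYZ (y, z) → IsDensity (ρE (y, z)) := fun y z h => by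
    rw [hρE, if_pos h, hPYZ]
    exact isDensity_inv_sum_smul_sum_smul (fun x => hP.1 _) (hPYZ y z ▸ h.ne') fun x => hρ _
  refine traceDist_cqState _ _ (fun ⟨x, y, z⟩ => ?_) (fun ⟨x, y, z⟩ hne => ?_)
  · by_cases h : 0 < PYZ (y, z)
    · exact (hρE_density y z h).1
    · rw [hρE, if_neg h]
      exact .zero
  · refine (hρE_density y z ((hPYZ_nonneg y z).lt_of_ne fun h0 => hne ?_)).2
    have hP0 : P (x, y, z) = 0 := (Finset.sum_eq_zero_iff_of_nonneg fun x' _ => hP.1 _).1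
      ((hPYZ y z).symm.trans h0.symm) x (Finset.mem_univ x)
    simp [hP0, ← h0]

/-- The trace distance between the Markov states ρ_{X↔Y↔(ZE)} and ρ_{X↔(Y,Z)↔E}
equals the purely classical statistical distance of the underlying
distributions. -/
theorem stmt6 {𝒳 𝒴 𝒵 : Type*} [Fintype 𝒳] [DecidableEq 𝒳]
    [Fintype 𝒴] [DecidableEq 𝒴] [Fintype 𝒵] [DecidableEq 𝒵] {d : ℕ} (hd : 1 ≤ d)
    (P : 𝒳 × 𝒴 × 𝒵 → ℝ) (hP : IsPMF P)
    (ρ : 𝒳 × 𝒴 × 𝒵 → Matrix (Fin d) (Fin d) ℂ) (hρ : ∀ t, IsDensity (ρ t))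
    -- marginals
    (PY : 𝒴 → ℝ) (hPY : ∀ y, PY y = ∑ x, ∑ z, P (x, y, z))
    (PXY : 𝒳 × 𝒴 → ℝ) (hPXY : ∀ x y, PXY (x, y) = ∑ z, P (x, y, z))
    (PYZ : 𝒴 × 𝒵 → ℝ) (hPYZ : ∀ y z, PYZ (y, z) = ∑ x, P (x, y, z))
    -- conditional states ρ_E^{y,z}
    (ρE : 𝒴 × 𝒵 → Matrix (Fin d) (Fin d) ℂ)
    (hρE : ∀ y z, ρE (y, z) =
      if 0 < PYZ (y, z)
      then ((PYZ (y, z) : ℂ))⁻¹ • ∑ x, (P (x, y, z) : ℂ) • ρ (x, y, z)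
      else 0) :
    traceDist
        (cqState
          (fun t => if PY t.2.1 = 0 then 0 else PXY (t.1, t.2.1) * PYZ t.2 / PY t.2.1)
          (fun t => ρE t.2))
        (cqState P (fun t => ρE t.2))
      = (1 / 2) * ∑ t : 𝒳 × 𝒴 × 𝒵,
          |(if PY t.2.1 = 0 then 0 else PXY (t.1, t.2.1) * PYZ t.2 / PY t.2.1) - P t| :=
  stmt6_general P hP ρ hρ PY PXY PYZ hPYZ ρE hρE
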